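/- Let m, λ be real constants with m ≠ 0 and let A : ℝ → ℝ be differentiable with A(t) ≠ 0 for all t. On ℝ⁴ with coordinates (t,x,y,z), define the Bianchi V metric g = diag(−A(t)²e^{mλt}, A(t)²e^{mλt}, A(t)²e^{2x}e^{m(λ−1)t}, A(t)²e^{2x}). Then the vector field X₃ = (2/m, 0, y, λz) is a conformal Killing vector of g with conformal factor ψ(t,x,y,z) = (2/m)·A′(t)/A(t) + λ: for all μ,ν and all points p, Σ_λ' [ξ^{λ'}(p)·∂_{λ'} g_{μν}(p) + g_{λ'ν}(p)·∂_μ ξ^{λ'}(p) + g_{μλ'}(p)·∂_ν ξ^{λ'}(p)] = 2ψ(p)·g_{μν}(p). -/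

import Mathlib

noncomputable section

/-- Partial derivative of `f` in the `μ`-th coordinate direction at `p`. -/
def pd (μ : Fin 4) (f : (Fin 4 → ℝ) → ℝ) (p : Fin 4 → ℝ) : ℝ :=
  fderiv ℝ f p (Pi.single μ 1)

/-- `ξ` is a conformal Killing vector of the metric `g` with conformal factor `ψ`. -/
def IsCKV (g : (Fin 4 → ℝ) → Matrix (Fin 4) (Fin 4) ℝ)
    (ξ : (Fin 4 → ℝ) → Fin 4 → ℝ) (ψ : (Fin 4 → ℝ) → ℝ) : Prop :=
  ∀ (μ ν : Fin 4) (p : Fin 4 → ℝ),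
    (∑ l : Fin 4, (ξ p l * pd l (fun q => g q μ ν) p
      + g p l ν * pd μ (fun q => ξ q l) p
      + g p μ l * pd ν (fun q => ξ q l) p)) = 2 * ψ p * g p μ ν

/-- `ξ` is a Killing vector of the metric `g`. -/
def IsKV (g : (Fin 4 → ℝ) → Matrix (Fin 4) (Fin 4) ℝ)
    (ξ : (Fin 4 → ℝ) → Fin 4 → ℝ) : Prop :=
  ∀ (μ ν : Fin 4) (p : Fin 4 → ℝ),
    (∑ l : Fin 4, (ξ p l * pd l (fun q => g q μ ν) p
      + g p l ν * pd μ (fun q => ξ q l) p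
      + g p μ l * pd ν (fun q => ξ q l) p)) = 0

/-!
Write `g = A(t)² h` with `h = diag(−e^{mλt}, e^{mλt}, e^{2x + m(λ−1)t}, e^{2x})`. Every entry of `h`
is `±exp` of a linear form `L_μ`, and the components of `X₃` are affine, `X₃^μ` depending on `x^μ`
alone with slope `b_μ = (0, 0, 1, λ)`. For such data the conformal Killing equation reduces to the
diagonal conditions `L_μ(X₃) + 2 b_μ = 2λ`, which hold, so `X₃` is a homothety of `h` with factor `λ`.
A conformal rescaling by `Ω²` adds `X₃(Ω)/Ω` to the factor, here `(2/m) A′/A`.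
-/

open Matrix Finset

lemma sum_mul_pd (f : (Fin 4 → ℝ) → ℝ) (p v : Fin 4 → ℝ) :
    ∑ l, v l * pd l f p = fderiv ℝ f p v := by
  conv_rhs => rw [← Finset.univ_sum_single v]
  simp only [pd, map_sum]
  refine Finset.sum_congr rfl fun l _ => ?_
  rw [← smul_eq_mul, ← map_smul, ← Pi.single_smul, smul_eq_mul, mul_one]

lemma pd_const (c : ℝ) (μ : Fin 4) (p : Fin 4 → ℝ) : pd μ (fun _ => c) p = 0 := by
  simp [pd]

lemma pd_const_mul_coord (c : ℝ) (i μ : Fin 4) (p : Fin 4 → ℝ) :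
    pd μ (fun q => c * q i) p = if μ = i then c else 0 := by
  simp [pd, ((hasFDerivAt_apply (𝕜 := ℝ) i p).const_mul c).fderiv, Pi.single_apply, eq_comm]

lemma pd_coord (i μ : Fin 4) (p : Fin 4 → ℝ) :
    pd μ (fun q => q i) p = if μ = i then 1 else 0 := by
  simpa using pd_const_mul_coord 1 i μ p

theorem IsCKV.sq_smul {h : (Fin 4 → ℝ) → Matrix (Fin 4) (Fin 4) ℝ}
    {ξ : (Fin 4 → ℝ) → Fin 4 → ℝ} {φ : (Fin 4 → ℝ) → ℝ} (hh : IsCKV h ξ φ)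
    (hhd : ∀ μ ν, Differentiable ℝ fun q => h q μ ν) {Ω : (Fin 4 → ℝ) → ℝ}
    (hΩ : Differentiable ℝ Ω) (hΩ0 : ∀ p, Ω p ≠ 0) :
    IsCKV (fun p => Ω p ^ 2 • h p) ξ (fun p => φ p + fderiv ℝ Ω p (ξ p) / Ω p) := by
  intro μ ν p
  have key := hh μ ν p
  simp only [sum_add_distrib, sum_mul_pd, Matrix.smul_apply, smul_eq_mul] at key ⊢
  rw [fderiv_fun_mul (c := fun q => Ω q ^ 2) ((hΩ p).pow 2) (hhd μ ν p),
    ((hΩ p).hasFDerivAt.pow 2).fderiv]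
  simp only [mul_assoc, ← mul_sum, _root_.add_apply, _root_.smul_apply, smul_eq_mul,
    nsmul_eq_mul]
  field_simp [hΩ0 p]
  linear_combination Ω p ^ 2 * key

theorem isCKV_diagonal {d : (Fin 4 → ℝ) → Fin 4 → ℝ} {ξ : (Fin 4 → ℝ) → Fin 4 → ℝ}
    {ψ : (Fin 4 → ℝ) → ℝ} (b : Fin 4 → ℝ)
    (hξ : ∀ l μ p, pd μ (fun q => ξ q l) p = if μ = l then b l else 0)
    (hd : ∀ μ p, fderiv ℝ (fun q => d q μ) p (ξ p) + 2 * b μ * d p μ = 2 * ψ p * d p μ) :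
    IsCKV (fun p => diagonal (d p)) ξ ψ := by
  intro μ ν p
  simp only [sum_add_distrib, sum_mul_pd, hξ, diagonal_apply]
  by_cases hμν : μ = ν
  · subst hμν
    simp only [↓reduceIte, mul_ite, mul_zero, sum_ite_eq, mem_univ]
    linear_combination hd μ p
  · simp [hμν]

lemma hasFDerivAt_mulVec_apply {k n : Type*} [Fintype n] [DecidableEq n] (W : Matrix k n ℝ)
    (μ : k) (p : n → ℝ) :
    HasFDerivAt (fun q => (W *ᵥ q) μ)
      ((ContinuousLinearMap.proj μ).comp (LinearMap.toContinuousLinearMap (toLin' W))) p :=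
  ((ContinuousLinearMap.proj μ).comp (LinearMap.toContinuousLinearMap (toLin' W))).hasFDerivAt

lemma differentiable_diagonal_exp_apply (s : Fin 4 → ℝ) (W : Matrix (Fin 4) (Fin 4) ℝ)
    (μ ν : Fin 4) :
    Differentiable ℝ fun q => diagonal (fun i => s i * Real.exp ((W *ᵥ q) i)) μ ν := by
  simp only [diagonal_apply]
  split_ifs
  · exact fun p => ((hasFDerivAt_mulVec_apply W μ p).exp.const_mul (s μ)).differentiableAt
  · exact differentiable_const 0

theorem isCKV_diagonal_exp (s : Fin 4 → ℝ) (W : Matrix (Fin 4) (Fin 4) ℝ)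
    {ξ : (Fin 4 → ℝ) → Fin 4 → ℝ} (b : Fin 4 → ℝ)
    (hξ : ∀ l μ p, pd μ (fun q => ξ q l) p = if μ = l then b l else 0)
    (c : ℝ) (hc : ∀ μ p, (W *ᵥ ξ p) μ + 2 * b μ = 2 * c) :
    IsCKV (fun p => diagonal fun μ => s μ * Real.exp ((W *ᵥ p) μ)) ξ (fun _ => c) := by
  refine isCKV_diagonal b hξ fun μ p => ?_
  rw [((hasFDerivAt_mulVec_apply W μ p).exp.const_mul (s μ)).fderiv]
  simp only [_root_.smul_apply, ContinuousLinearMap.comp_apply,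
    LinearMap.coe_toContinuousLinearMap', toLin'_apply, ContinuousLinearMap.proj_apply,
    smul_eq_mul]
  linear_combination s μ * Real.exp ((W *ᵥ p) μ) * hc μ p

/-- the vector field `X₃ = (2/m)∂_t + y∂_y + λz∂_z` is a conformal Killing
vector of the Bianchi V metric `diag(−A²e^{mλt}, A²e^{mλt}, A²e^{2x}e^{m(λ−1)t}, A²e^{2x})`
with conformal factor `ψ = (2/m) A′(t)/A(t) + λ`. -/
theorem bianchiV_X3_is_CKV (m lam : ℝ) (hm : m ≠ 0)
    (A : ℝ → ℝ) (hA : Differentiable ℝ A) (hA0 : ∀ t, A t ≠ 0)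
    (g : (Fin 4 → ℝ) → Matrix (Fin 4) (Fin 4) ℝ)
    (hg : g = fun p => Matrix.diagonal
      ![-((A (p 0)) ^ 2 * Real.exp (m * lam * p 0)),
        (A (p 0)) ^ 2 * Real.exp (m * lam * p 0),
        (A (p 0)) ^ 2 * Real.exp (2 * p 1) * Real.exp (m * (lam - 1) * p 0),
        (A (p 0)) ^ 2 * Real.exp (2 * p 1)])
    (ξ : (Fin 4 → ℝ) → Fin 4 → ℝ)
    (hξ : ξ = fun p => ![2 / m, 0, p 2, lam * p 3])
    (ψ : (Fin 4 → ℝ) → ℝ)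
    (hψ : ψ = fun p => (2 / m) * deriv A (p 0) / A (p 0) + lam) :
    IsCKV g ξ ψ := by
  subst hg hξ hψ
  have hX₃ : ∀ (l μ : Fin 4) p, pd μ (fun q => ![2 / m, 0, q 2, lam * q 3] l) p
      = if μ = l then ![0, 0, 1, lam] l else 0 := by
    intro l μ p
    fin_cases l <;> simp [pd_const, pd_coord, pd_const_mul_coord]
  have hflat := isCKV_diagonal_exp ![-1, 1, 1, 1]
    !![m * lam, 0, 0, 0; m * lam, 0, 0, 0; m * (lam - 1), 2, 0, 0; 0, 2, 0, 0] _ hX₃ lam (by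
      intro μ p
      fin_cases μ <;> simp [mulVec, dotProduct, Fin.sum_univ_four, field])
  have hΩ : ∀ p, HasFDerivAt (fun q : Fin 4 → ℝ => A (q 0))
      (deriv A (p 0) • ContinuousLinearMap.proj (R := ℝ) (φ := fun _ : Fin 4 => ℝ) 0) p :=
    fun p => (hA (p 0)).hasDerivAt.comp_hasFDerivAt (f := fun q : Fin 4 → ℝ => q 0) p
      (hasFDerivAt_apply 0 p)
  convert hflat.sq_smul (differentiable_diagonal_exp_apply _ _)
    (fun p => (hΩ p).differentiableAt) (fun p => hA0 (p 0)) using 1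
  · funext p
    rw [← diagonal_smul]
    congr 1
    ext i
    fin_cases i <;> simp [mulVec, dotProduct, Fin.sum_univ_four, Real.exp_add]
    ring
  · funext p
    rw [(hΩ p).fderiv]
    simp only [_root_.smul_apply, ContinuousLinearMap.proj_apply, cons_val_zero, smul_eq_mul]
    ring
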